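/- Let M be a matroid with a k-painting, and let M' = M / C \ D be a minor with an induced k-painting. If O' is a circuit of M' and O a circuit of M with O' ⊆ O ⊆ O' ∪ C such that the painting of M' is induced by that of M, then there is a nonzero λ ∈ k with c_O restricted to O' equal to λ · c'_{O'}. -/

import Mathlib

/-! For `e ≠ f` in `O'`, some cocircuit of `M ／ Cs` meets `O'` in exactly `{e, f}`. It is a
cocircuit of `M` avoiding `Cs`, so it also meets `O` and the lift `o` of `O'` given by the induced
painting in exactly `{e, f}`. Orthogonality of `c O` and of `c o` to it then gives
`c O e / c O f = c o e / c o f = c' O' e / c' O' f`. -/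

open Set

namespace Matroid

variable {α : Type*}

/-- A circuit of a matroid is a minimal dependent set. -/
def Circuit (M : Matroid α) (C : Set α) : Prop :=
  M.Dep C ∧ ∀ D, M.Dep D → D ⊆ C → D = C

/-- A cocircuit is a circuit of the dual matroid. -/
def Cocircuit (M : Matroid α) (D : Set α) : Prop := M✶.Circuit D

/-- The matroid obtained by deleting the set `D`. -/
def delete' (M : Matroid α) (D : Set α) : Matroid α := M ↾ (M.E \ D)

/-- The matroid obtained by contracting the set `C`. -/
def contract' (M : Matroid α) (C : Set α) : Matroid α := ((M✶).delete' C)✶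

/-- `N` is a minor of `M` if it is obtained from `M` by contracting a set `C`
and deleting a set `D`, where `C` and `D` are disjoint subsets of the ground set. -/
def IsMinor' (N M : Matroid α) : Prop :=
  ∃ C D, Disjoint C D ∧ C ∪ D ⊆ M.E ∧ N = (M.contract' C).delete' D

/-- A scrawl is a union of circuits. -/
def Scrawl (M : Matroid α) (W : Set α) : Prop :=
  ∃ S : Set (Set α), (∀ C ∈ S, M.Circuit C) ∧ W = ⋃₀ S

/-- A matroid is tame if every circuit-cocircuit intersection is finite. -/
def Tame (M : Matroid α) : Prop :=
  ∀ C D, M.Circuit C → M.Cocircuit D → (C ∩ D).Finite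

/-- A `k`-painting of a matroid: nonzero coefficients on each circuit and each
cocircuit such that each circuit-cocircuit pair is "orthogonal". -/
def IsPainting {k : Type*} [Field k] (M : Matroid α)
    (c : Set α → α → k) (d : Set α → α → k) : Prop :=
  (∀ C, M.Circuit C → ∀ e ∈ C, c C e ≠ 0) ∧
  (∀ D, M.Cocircuit D → ∀ e ∈ D, d D e ≠ 0) ∧
  (∀ C D, M.Circuit C → M.Cocircuit D →
    (C ∩ D).Finite ∧ ∑ᶠ e ∈ C ∩ D, c C e * d D e = 0)

end Matroid

theorem Set.inter_eq_of_subset_union_of_disjoint {α : Type*} {s t u v : Set α} (hst : s ⊆ t)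
    (hts : t ⊆ s ∪ u) (hvu : Disjoint v u) : t ∩ v = s ∩ v :=
  subset_antisymm (fun _ ⟨hxt, hxv⟩ ↦ ⟨(hts hxt).resolve_right (hvu.notMem_of_mem_left hxv), hxv⟩)
    (inter_subset_inter_left v hst)

namespace Matroid

variable {α k : Type*} [Field k] {M : Matroid α} {c d : Set α → α → k}
  {C C₁ C₂ K X O' O₁ O₂ : Set α} {e f : α}

theorem circuit_iff_isCircuit : M.Circuit C ↔ M.IsCircuit C :=
  isCircuit_iff.symm

theorem cocircuit_iff_isCocircuit : M.Cocircuit K ↔ M.IsCocircuit K :=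
  circuit_iff_isCircuit

theorem IsCircuit.exists_isCocircuit_inter_eq_pair (hC : M.IsCircuit C) (he : e ∈ C)
    (hf : f ∈ C) (hef : e ≠ f) : ∃ K, M.IsCocircuit K ∧ C ∩ K = {e, f} := by
  obtain ⟨K, hK, hKC⟩ :=
    (hC.sdiff_singleton_indep hf).exists_isCocircuit_inter_eq_mem ⟨he, hef⟩
  have heK : e ∈ K := (hKC.symm.subset rfl).1
  have hsub : C ∩ K ⊆ {e, f} := by
    rintro x ⟨hxC, hxK⟩
    by_cases hxf : x = f
    · exact Or.inr hxf
    · exact Or.inl (hKC.subset ⟨hxK, hxC, hxf⟩)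
  have hfK : f ∈ K := by
    by_contra hfK
    refine hC.inter_isCocircuit_ne_singleton hK (e := e)
      (subset_antisymm (fun x hx ↦ ?_) (singleton_subset_iff.2 ⟨he, heK⟩))
    obtain rfl | rfl := hsub hx
    exacts [rfl, absurd hx.2 hfK]
  refine ⟨K, hK, hsub.antisymm ?_⟩
  rintro _ (rfl | rfl)
  exacts [⟨he, heK⟩, ⟨hf, hfK⟩]

theorem IsPainting.mul_eq_mul_of_inter_eq_pair (hp : M.IsPainting c d) (hC₁ : M.IsCircuit C₁)
    (hC₂ : M.IsCircuit C₂) (hK : M.IsCocircuit K) (h₁ : C₁ ∩ K = {e, f}) (h₂ : C₂ ∩ K = {e, f})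
    (hef : e ≠ f) : c C₁ e * c C₂ f = c C₁ f * c C₂ e := by
  rw [← circuit_iff_isCircuit] at hC₁ hC₂
  rw [← cocircuit_iff_isCocircuit] at hK
  have horth₁ := (hp.2.2 _ _ hC₁ hK).2
  have horth₂ := (hp.2.2 _ _ hC₂ hK).2
  rw [h₁, finsum_mem_pair hef] at horth₁
  rw [h₂, finsum_mem_pair hef] at horth₂
  have heK : e ∈ K := (h₁.symm.subset (mem_insert e {f})).2
  refine mul_right_cancel₀ (hp.2.1 K hK e heK) ?_
  linear_combination c C₂ f * horth₁ - c C₁ f * horth₂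

theorem IsPainting.exists_eq_mul_of_isCircuit_contract (hp : M.IsPainting c d)
    (hO' : (M ／ X).IsCircuit O') (hO₁ : M.IsCircuit O₁) (hO₂ : M.IsCircuit O₂)
    (h₁ : O' ⊆ O₁) (h₁' : O₁ ⊆ O' ∪ X) (h₂ : O' ⊆ O₂) (h₂' : O₂ ⊆ O' ∪ X) :
    ∃ l : k, l ≠ 0 ∧ ∀ e ∈ O', c O₁ e = l * c O₂ e := by
  have hne : ∀ {O}, M.IsCircuit O → ∀ e ∈ O, c O e ≠ 0 :=
    fun hO ↦ hp.1 _ (circuit_iff_isCircuit.2 hO)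
  obtain ⟨f, hf⟩ := hO'.nonempty
  refine ⟨c O₁ f / c O₂ f, div_ne_zero (hne hO₁ f (h₁ hf)) (hne hO₂ f (h₂ hf)), fun e he ↦ ?_⟩
  obtain rfl | hef := eq_or_ne e f
  · field_simp [hne hO₂ e (h₂ he)]
  obtain ⟨K, hK, hO'K⟩ := hO'.exists_isCocircuit_inter_eq_pair he hf hef
  obtain ⟨hKM, hKX⟩ := contract_isCocircuit_iff.1 hK
  have hcross := hp.mul_eq_mul_of_inter_eq_pair hO₁ hO₂ hKM
    ((Set.inter_eq_of_subset_union_of_disjoint h₁ h₁' hKX).trans hO'K)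
    ((Set.inter_eq_of_subset_union_of_disjoint h₂ h₂' hKX).trans hO'K) hef
  field_simp [hne hO₂ f (h₂ hf)]
  linear_combination hcross

end Matroid

theorem stmt16_general {α : Type*} {k : Type*} [Field k] (M : Matroid α) (Cs Ds : Set α)
    (c d : Set α → α → k) (hpaint : M.IsPainting c d)
    (M' : Matroid α) (hM' : M' = (M.contract' Cs).delete' Ds)
    (c' : Set α → α → k)
    (hindc : ∀ o', M'.Circuit o' → ∃ o, M.Circuit o ∧ o' ⊆ o ∧ o ⊆ o' ∪ Cs ∧
      ∀ e ∈ o', c' o' e = c o e)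
    (O' : Set α) (hO' : M'.Circuit O')
    (O : Set α) (hO : M.Circuit O) (hsub : O' ⊆ O) (hsub' : O ⊆ O' ∪ Cs) :
    ∃ l : k, l ≠ 0 ∧ ∀ e ∈ O', c O e = l * c' O' e := by
  obtain ⟨o, ho, hO'o, hoCs, hagree⟩ := hindc O' hO'
  have hO'contract : (M.contract Cs).IsCircuit O' :=
    (Matroid.circuit_iff_isCircuit.1 (hM' ▸ hO')).of_delete
  obtain ⟨l, hl, hprop⟩ := hpaint.exists_eq_mul_of_isCircuit_contract hO'contract
    (Matroid.circuit_iff_isCircuit.1 hO) (Matroid.circuit_iff_isCircuit.1 ho) hsub hsub' hO'o hoCs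
  exact ⟨l, hl, fun e he ↦ hagree e he ▸ hprop e he⟩

/-- If a painting of a minor is induced by a painting of the whole matroid, then on any
circuit `O'` of the minor, the coefficients coming from any lift `O` of `O'` agree with
the minor's coefficients up to a nonzero scalar. -/
theorem stmt16 {α : Type*} {k : Type*} [Field k] (M : Matroid α) (Cs Ds : Set α)
    (c d : Set α → α → k) (hpaint : M.IsPainting c d)
    (M' : Matroid α) (hM' : M' = (M.contract' Cs).delete' Ds)
    (c' d' : Set α → α → k) (hpaint' : M'.IsPainting c' d')
    (hindc : ∀ o', M'.Circuit o' → ∃ o, M.Circuit o ∧ o' ⊆ o ∧ o ⊆ o' ∪ Cs ∧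
      ∀ e ∈ o', c' o' e = c o e)
    (hindd : ∀ b', M'.Cocircuit b' → ∃ b, M.Cocircuit b ∧ b' ⊆ b ∧ b ⊆ b' ∪ Ds ∧
      ∀ e ∈ b', d' b' e = d b e)
    (O' : Set α) (hO' : M'.Circuit O')
    (O : Set α) (hO : M.Circuit O) (hsub : O' ⊆ O) (hsub' : O ⊆ O' ∪ Cs) :
    ∃ l : k, l ≠ 0 ∧ ∀ e ∈ O', c O e = l * c' O' e :=
  stmt16_general M Cs Ds c d hpaint M' hM' c' hindc O' hO' O hO hsub hsub'
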